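/- arXiv:1008.5058 — 4 statements merged into one kernel-verified Lean document; each statement's English description precedes it below -/
import Mathlib

section
/- Let T > 0 and let f : [0,T] × (0,∞) → ℝ be locally bounded with f(t,·) convex on (0,∞) for every t ∈ [0,T]. Then for every t ∈ [0,T], the function y ↦ f*(t,y) is convex on (0,∞), where f* is the upper semicontinuous envelope of f. -/
/-!
Fix `t` and `z = a y₁ + b y₂`. Shifting the space variable of a point `(s, y)` near `(t, z)`
by `yᵢ - z` gives a point near `(t, yᵢ)`, where `f < f*(t, yᵢ) + ε`. Since `y` is the same
convex combination of the two shifted points, convexity of `f s` gives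
`f s y ≤ a f*(t, y₁) + b f*(t, y₂) + ε` near `(t, z)`, and taking the limsup proves convexity
of `f*(t, ·)`.
-/

open Filter Set Topology

section

variable {X E : Type*} [TopologicalSpace X] [AddCommGroup E] [TopologicalSpace E] [ContinuousAdd E]

theorem tendsto_add_sub_nhdsWithin_prod {A : Set X} {C : Set E} (hC : IsOpen C) {t : X}
    {y z : E} (hy : y ∈ C) :
    Tendsto (fun q : X × E => (q.1, q.2 + (y - z))) (𝓝[A ×ˢ C] (t, z)) (𝓝[A ×ˢ C] (t, y)) := by
  have hcont : Continuous (fun q : X × E => (q.1, q.2 + (y - z))) := by fun_prop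
  have hto : Tendsto (fun q : X × E => (q.1, q.2 + (y - z))) (𝓝 (t, z)) (𝓝 (t, y)) := by
    simpa using hcont.tendsto (t, z)
  refine tendsto_nhdsWithin_iff.mpr ⟨hto.mono_left nhdsWithin_le_nhds, ?_⟩
  have hshift : ∀ᶠ q in 𝓝[A ×ˢ C] (t, z), q.2 + (y - z) ∈ C :=
    eventually_nhdsWithin_of_eventually_nhds <|
      (hto.eventually (hC.mem_nhds hy |> prod_mem_nhds univ_mem)).mono fun _ h => h.2
  filter_upwards [self_mem_nhdsWithin, hshift] with q hq hq'
  exact ⟨hq.1, hq'⟩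

theorem ConvexOn.limsup_nhdsWithin_prod [Module ℝ E] {g : X → E → ℝ} {A : Set X} {C : Set E}
    {t : X}
    (ht : t ∈ A) (hC : IsOpen C) (hconv : ∀ s ∈ A, ConvexOn ℝ C (g s))
    (hbdd : ∀ y ∈ C, (𝓝[A ×ˢ C] (t, y)).IsBoundedUnder (· ≤ ·) (fun q => g q.1 q.2))
    (hcobdd : ∀ y ∈ C, (𝓝[A ×ˢ C] (t, y)).IsCoboundedUnder (· ≤ ·) (fun q => g q.1 q.2)) :
    ConvexOn ℝ C (fun y => limsup (fun q => g q.1 q.2) (𝓝[A ×ˢ C] (t, y))) := by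
  refine ⟨(hconv t ht).1, fun y₁ hy₁ y₂ hy₂ a b ha hb hab => ?_⟩
  set z := a • y₁ + b • y₂
  set L := fun y => limsup (fun q : X × E => g q.1 q.2) (𝓝[A ×ˢ C] (t, y))
  refine le_of_forall_pos_le_add fun ε hε => ?_
  have hnear : ∀ y ∈ C, ∀ᶠ q in 𝓝[A ×ˢ C] (t, z),
      q.2 + (y - z) ∈ C ∧ g q.1 (q.2 + (y - z)) < L y + ε := fun y hy => by
    have hy' : ∀ᶠ q in 𝓝[A ×ˢ C] (t, y), q ∈ A ×ˢ C ∧ g q.1 q.2 < L y + ε :=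
      Eventually.and self_mem_nhdsWithin <|
        eventually_lt_of_limsup_lt (lt_add_of_pos_right _ hε) (hbdd y hy)
    exact ((tendsto_add_sub_nhdsWithin_prod hC hy).eventually hy').mono fun _ h => ⟨h.1.2, h.2⟩
  refine limsup_le_of_le (hcobdd z ((hconv t ht).1 hy₁ hy₂ ha hb hab)) ?_
  filter_upwards [self_mem_nhdsWithin, hnear y₁ hy₁, hnear y₂ hy₂]
    with q hq ⟨hm₁, hlt₁⟩ ⟨hm₂, hlt₂⟩
  have hsplit : a • (q.2 + (y₁ - z)) + b • (q.2 + (y₂ - z)) = q.2 := by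
    linear_combination (norm := module) hab • (q.2 - z)
  calc g q.1 q.2 = g q.1 (a • (q.2 + (y₁ - z)) + b • (q.2 + (y₂ - z))) := by rw [hsplit]
    _ ≤ a * g q.1 (q.2 + (y₁ - z)) + b * g q.1 (q.2 + (y₂ - z)) :=
      (hconv q.1 hq.1).2 hm₁ hm₂ ha hb hab
    _ ≤ a * (L y₁ + ε) + b * (L y₂ + ε) := by gcongr
    _ = a • L y₁ + b • L y₂ + ε := by rw [smul_eq_mul, smul_eq_mul]; linear_combination ε * hab

end

theorem stmt_4_general (T : ℝ) (f : ℝ → ℝ → ℝ)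
    (hloc : ∀ p ∈ Set.Icc (0 : ℝ) T ×ˢ Set.Ioi (0 : ℝ), ∃ ε > (0 : ℝ), ∃ M : ℝ,
      ∀ q ∈ Set.Icc (0 : ℝ) T ×ˢ Set.Ioi (0 : ℝ), dist q p < ε → |f q.1 q.2| ≤ M)
    (hconv : ∀ t ∈ Set.Icc (0 : ℝ) T, ConvexOn ℝ (Set.Ioi 0) (f t))
    (fstar : ℝ → ℝ → ℝ)
    (hfstar : ∀ t y : ℝ, fstar t y =
      Filter.limsup (fun q : ℝ × ℝ => f q.1 q.2)
        (nhdsWithin (t, y) (Set.Icc (0 : ℝ) T ×ˢ Set.Ioi (0 : ℝ)))) :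
    ∀ t ∈ Set.Icc (0 : ℝ) T, ConvexOn ℝ (Set.Ioi 0) (fstar t) := by
  intro t ht
  set S := Set.Icc (0 : ℝ) T ×ˢ Set.Ioi (0 : ℝ)
  have habs : ∀ p ∈ S, ∃ M, ∀ᶠ q in 𝓝[S] p, |f q.1 q.2| ≤ M := fun p hp => by
    obtain ⟨ε, hε, M, hM⟩ := hloc p hp
    exact ⟨M, eventually_nhdsWithin_iff.mpr <|
      mem_of_superset (Metric.ball_mem_nhds p hε) fun q hqp hq => hM q hq hqp⟩
  rw [show fstar t = _ from funext (hfstar t)]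
  refine ConvexOn.limsup_nhdsWithin_prod ht isOpen_Ioi hconv (fun y hy => ?_) (fun y hy => ?_)
  all_goals
    obtain ⟨M, hM⟩ := habs (t, y) ⟨ht, hy⟩
  · exact isBoundedUnder_of_eventually_le (hM.mono fun _ h => (abs_le.mp h).2)
  · have := nhdsWithin_neBot_of_mem (show (t, y) ∈ S from ⟨ht, hy⟩)
    exact (isBoundedUnder_of_eventually_ge (hM.mono fun _ h => (abs_le.mp h).1)).isCoboundedUnder_le

theorem stmt_4 (T : ℝ) (hT : 0 < T) (f : ℝ → ℝ → ℝ)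
    (hloc : ∀ p ∈ Set.Icc (0 : ℝ) T ×ˢ Set.Ioi (0 : ℝ), ∃ ε > (0 : ℝ), ∃ M : ℝ,
      ∀ q ∈ Set.Icc (0 : ℝ) T ×ˢ Set.Ioi (0 : ℝ), dist q p < ε → |f q.1 q.2| ≤ M)
    (hconv : ∀ t ∈ Set.Icc (0 : ℝ) T, ConvexOn ℝ (Set.Ioi 0) (f t))
    (fstar : ℝ → ℝ → ℝ)
    (hfstar : ∀ t y : ℝ, fstar t y =
      Filter.limsup (fun q : ℝ × ℝ => f q.1 q.2)
        (nhdsWithin (t, y) (Set.Icc (0 : ℝ) T ×ˢ Set.Ioi (0 : ℝ)))) :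
    ∀ t ∈ Set.Icc (0 : ℝ) T, ConvexOn ℝ (Set.Ioi 0) (fstar t) :=
  stmt_4_general T f hloc hconv fstar hfstar
end

section
/- Let T > 0, c ∈ ℝ and v : [0,T] × ℝ → ℝ be locally bounded, and define ṽ(t,y) := sup_{x ≥ c(T−t)} (v(t,x) − x·y), assumed finite for every (t,y) ∈ [0,T] × (0,∞). Then for all (t,y) ∈ [0,T] × (0,∞) and every x ≥ c(T−t), one has ṽ_*(t,y) ≥ v_*(t,x) − x·y, where ṽ_* is the lower semicontinuous envelope of ṽ on [0,T]×(0,∞) and v_* is the lower semicontinuous envelope of v on [0,T]×ℝ. -/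
/- STATEMENT 5:
Let T > 0, c ∈ ℝ and v : [0,T] × ℝ → ℝ be locally bounded, and define
ṽ(t,y) := sup_{x ≥ c(T−t)} (v(t,x) − x·y), assumed finite for every
(t,y) ∈ [0,T] × (0,∞). Then for all (t,y) ∈ [0,T] × (0,∞) and every
x ≥ c(T−t), one has ṽ_*(t,y) ≥ v_*(t,x) − x·y, where ṽ_* is the lower
semicontinuous envelope of ṽ on [0,T]×(0,∞) and v_* is the lower
semicontinuous envelope of v on [0,T]×ℝ (both defined via liminf within the
respective domains). -/
theorem stmt_5 (T c : ℝ) (hT : 0 < T) (v : ℝ → ℝ → ℝ)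
    (hvloc : ∀ p ∈ Set.Icc (0 : ℝ) T ×ˢ (Set.univ : Set ℝ), ∃ ε > (0 : ℝ), ∃ M : ℝ,
      ∀ q ∈ Set.Icc (0 : ℝ) T ×ˢ (Set.univ : Set ℝ), dist q p < ε → |v q.1 q.2| ≤ M)
    (vt : ℝ → ℝ → ℝ)
    (hvt : ∀ t y : ℝ, vt t y =
      sSup {z : ℝ | ∃ x : ℝ, c * (T - t) ≤ x ∧ z = v t x - x * y})
    (hfin : ∀ t ∈ Set.Icc (0 : ℝ) T, ∀ y ∈ Set.Ioi (0 : ℝ),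
      BddAbove {z : ℝ | ∃ x : ℝ, c * (T - t) ≤ x ∧ z = v t x - x * y})
    (vtlow : ℝ → ℝ → ℝ)
    (hvtlow : ∀ t y : ℝ, vtlow t y =
      Filter.liminf (fun q : ℝ × ℝ => vt q.1 q.2)
        (nhdsWithin (t, y) (Set.Icc (0 : ℝ) T ×ˢ Set.Ioi (0 : ℝ))))
    (vlow : ℝ → ℝ → ℝ)
    (hvlow : ∀ t x : ℝ, vlow t x =
      Filter.liminf (fun q : ℝ × ℝ => v q.1 q.2)
        (nhdsWithin (t, x) (Set.Icc (0 : ℝ) T ×ˢ (Set.univ : Set ℝ)))) :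
    ∀ t ∈ Set.Icc (0 : ℝ) T, ∀ y ∈ Set.Ioi (0 : ℝ), ∀ x : ℝ, c * (T - t) ≤ x →
      vlow t x - x * y ≤ vtlow t y := by
  intro t ht y hy x hx
  set D : Set (ℝ × ℝ) := Set.Icc (0 : ℝ) T ×ˢ Set.Ioi (0 : ℝ) with hDdef
  set E : Set (ℝ × ℝ) := Set.Icc (0 : ℝ) T ×ˢ (Set.univ : Set ℝ) with hEdef
  set F := nhdsWithin ((t, y) : ℝ × ℝ) D with hFdef
  set G := nhdsWithin ((t, x) : ℝ × ℝ) E with hGdef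
  have htyD : ((t, y) : ℝ × ℝ) ∈ D := ⟨ht, hy⟩
  have hpure : (pure ((t, y) : ℝ × ℝ)) ≤ F := pure_le_nhdsWithin htyD
  -- coboundedness of vt along F
  have hcob : F.IsCoboundedUnder (· ≥ ·) (fun q : ℝ × ℝ => vt q.1 q.2) := by
    refine ⟨vt t y, fun a ha => ?_⟩
    have := hpure (Filter.mem_map.mp ha)
    simpa using this
  -- key claim: every b < vlow t x - x*y satisfies b ≤ vtlow t y
  have key : ∀ b : ℝ, b < vlow t x - x * y → b ≤ vtlow t y := by
    intro b hb
    set δ : ℝ := (vlow t x - x * y - b) / 2 with hδdef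
    have hδ : 0 < δ := by simp only [hδdef]; linarith
    -- Step 1: boundedness of v from below along G
    have hbndG : G.IsBoundedUnder (· ≥ ·) (fun q : ℝ × ℝ => v q.1 q.2) := by
      obtain ⟨ε, hε, M, hM⟩ := hvloc (t, x) ⟨ht, trivial⟩
      refine ⟨-M, ?_⟩
      rw [Filter.eventually_map]
      have h1 : ∀ᶠ q in G, q ∈ E := self_mem_nhdsWithin
      have h2 : ∀ᶠ q in G, dist q ((t, x) : ℝ × ℝ) < ε :=
        nhdsWithin_le_nhds (Metric.ball_mem_nhds _ hε)
      filter_upwards [h1, h2] with q hq1 hq2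
      have := hM q hq1 hq2
      have := abs_le.mp this
      linarith [this.1]
    -- Step 1': eventually v > vlow t x - δ along G
    have hlt : vlow t x - δ < Filter.liminf (fun q : ℝ × ℝ => v q.1 q.2) G := by
      rw [← hvlow t x]; linarith
    have hstep1 : ∀ᶠ q in G, vlow t x - δ < v q.1 q.2 :=
      Filter.eventually_lt_of_lt_liminf hlt hbndG
    -- Step 2: the map φ tends to (t,x) within E
    set φ : ℝ × ℝ → ℝ × ℝ := fun q => (q.1, max x (c * (T - q.1))) with hφdef
    have hφcont : Continuous φ := by
      apply Continuous.prodMk continuous_fst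
      exact continuous_const.max (continuous_const.mul
        (continuous_const.sub continuous_fst))
    have hφval : φ (t, y) = (t, x) := by
      simp only [hφdef]
      rw [max_eq_left hx]
    have hφmaps : Set.MapsTo φ D E := fun q hq => ⟨hq.1, trivial⟩
    have hφtend : Filter.Tendsto φ F G := by
      have : ContinuousWithinAt φ D (t, y) := hφcont.continuousWithinAt
      have h := this.tendsto_nhdsWithin hφmaps
      rwa [hφval] at h
    -- Step 3: pull back
    have hstep3 : ∀ᶠ q in F, vlow t x - δ < v (φ q).1 (φ q).2 :=
      hφtend.eventually hstep1
    -- Step 4: the linear part tends to x*y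
    have hgtend : Filter.Tendsto (fun q : ℝ × ℝ => max x (c * (T - q.1)) * q.2)
        F (nhds (x * y)) := by
      have hc : Continuous (fun q : ℝ × ℝ => max x (c * (T - q.1)) * q.2) := by
        exact (continuous_const.max (continuous_const.mul
          (continuous_const.sub continuous_fst))).mul continuous_snd
      have := hc.continuousAt (x := ((t, y) : ℝ × ℝ))
      have h := this.tendsto
      rw [max_eq_left hx] at h
      exact h.mono_left nhdsWithin_le_nhds
    have hstep4 : ∀ᶠ q in F, max x (c * (T - q.1)) * q.2 < x * y + δ := by
      have : x * y < x * y + δ := by linarith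
      exact hgtend.eventually_lt_const this
    -- Step 5: eventually in domain
    have hstep5 : ∀ᶠ q in F, q ∈ D := self_mem_nhdsWithin
    -- combine: eventually vt ≥ b
    have hev : ∀ᶠ q in F, b ≤ vt q.1 q.2 := by
      filter_upwards [hstep3, hstep4, hstep5] with q h3 h4 h5
      set m : ℝ := max x (c * (T - q.1)) with hmdef
      have hmem : v q.1 m - m * q.2 ∈
          {z : ℝ | ∃ x' : ℝ, c * (T - q.1) ≤ x' ∧ z = v q.1 x' - x' * q.2} :=
        ⟨m, le_max_right _ _, rfl⟩
      have hle : v q.1 m - m * q.2 ≤ vt q.1 q.2 := by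
        rw [hvt q.1 q.2]
        exact le_csSup (hfin q.1 h5.1 q.2 h5.2) hmem
      have : b ≤ v q.1 m - m * q.2 := by
        have h3' : vlow t x - δ < v q.1 m := h3
        have hδeq : vlow t x - x * y - 2 * δ = b := by simp only [hδdef]; ring
        nlinarith [h3', h4]
      linarith
    have := Filter.le_liminf_of_le hcob hev
    rwa [← hvtlow t y] at this
  -- conclude
  by_contra hcon
  push_neg at hcon
  have : (vtlow t y + (vlow t x - x * y)) / 2 ≤ vtlow t y :=
    key _ (by linarith)
  linarith
end

section
/- Let ε > 0 and let u : (0,∞) → ℝ be upper semicontinuous with the following property: for every y₀ ∈ (0,∞) and every continuously differentiable function ψ : (0,∞) → ℝ such that u − ψ has a local maximum at y₀, one has ψ′(y₀) ≤ −ε. Then u is nonincreasing on (0,∞). -/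
open Set Real

/-! Suppose `a < b` but `u a < u b`. Tilt `u` by a smooth `ψ` of small slope `k > 0` which
also rises by a large `A` just right of `b`: then `u - ψ` is larger at `b` than at `a` and at
`b + 1`, so its maximum over `[a, b + 1]` is interior and thus a local maximum. There the
subsolution property gives `ψ' ≤ -ε < 0`, whereas `ψ' ≥ k > 0` because the step is monotone. -/

theorem UpperSemicontinuousOn.exists_mem_Ioo_isMaxOn_Icc {α β : Type*} [TopologicalSpace α]
    [LinearOrder α] [OrderTopology α] [CompactIccSpace α] [LinearOrder β] {f : α → β}
    {a b c : α} (hf : UpperSemicontinuousOn f (Icc a c)) (hab : a ≤ b) (hbc : b ≤ c)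
    (ha : f a < f b) (hc : f c < f b) : ∃ y ∈ Ioo a c, IsMaxOn f (Icc a c) y := by
  obtain ⟨y, hy, hmax⟩ := hf.exists_isMaxOn ⟨a, left_mem_Icc.2 (hab.trans hbc)⟩ isCompact_Icc
  have hby : f b ≤ f y := hmax ⟨hab, hbc⟩
  refine ⟨y, ⟨hy.1.lt_of_ne ?_, hy.2.lt_of_ne ?_⟩, hmax⟩
  · rintro rfl
    exact (ha.trans_le hby).false
  · rintro rfl
    exact (hc.trans_le hby).false

noncomputable def tiltedStep (k A b x : ℝ) : ℝ := k * x + A * smoothTransition (x - b)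

section

variable {k A b x : ℝ}

theorem continuous_tiltedStep (k A b : ℝ) : Continuous (tiltedStep k A b) := by
  unfold tiltedStep
  fun_prop

theorem tiltedStep_of_le (hx : x ≤ b) : tiltedStep k A b x = k * x := by
  simp [tiltedStep, smoothTransition.zero_of_nonpos (sub_nonpos.2 hx)]

theorem tiltedStep_add_one : tiltedStep k A b (b + 1) = k * (b + 1) + A := by
  simp [tiltedStep]

theorem hasDerivAt_tiltedStep (k A b x : ℝ) :
    HasDerivAt (tiltedStep k A b) (k + A * deriv smoothTransition (x - b)) x := by
  have hσ : HasDerivAt (fun y => smoothTransition (y - b)) (deriv smoothTransition (x - b)) x := by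
    have hd := (smoothTransition.contDiff (n := 1)).differentiable one_ne_zero (x - b)
    simpa using hd.hasDerivAt.comp_sub_const x b
  have h := ((hasDerivAt_id x).const_mul k).fun_add (hσ.const_mul A)
  rw [mul_one] at h
  exact h

theorem continuous_deriv_tiltedStep (k A b : ℝ) :
    Continuous fun x => k + A * deriv smoothTransition (x - b) := by
  have hσ := (smoothTransition.contDiff (n := 1)).continuous_deriv le_rfl
  fun_prop

theorem le_deriv_tiltedStep (hA : 0 ≤ A) (x : ℝ) :
    k ≤ k + A * deriv smoothTransition (x - b) :=
  le_add_of_nonneg_right (mul_nonneg hA smoothTransition.monotone.deriv_nonneg)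

end

theorem exists_isLocalMax_sub_tiltedStep {u : ℝ → ℝ} {a b : ℝ}
    (hu : UpperSemicontinuousOn u (Icc a (b + 1))) (hab : a < b) (hlt : u a < u b) :
    ∃ k > 0, ∃ A ≥ 0, ∃ y ∈ Ioo a (b + 1), IsLocalMax (fun x => u x - tiltedStep k A b x) y := by
  set k := (u b - u a) / (b - a) / 2
  set A := max (u (b + 1) - u b) 0
  have hk : 0 < k := div_pos (div_pos (sub_pos.2 hlt) (sub_pos.2 hab)) two_pos
  have hkba : k * (b - a) = (u b - u a) / 2 := by
    simp only [k]
    field_simp [(sub_pos.2 hab).ne']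
  have husc : UpperSemicontinuousOn (fun x => u x - tiltedStep k A b x) (Icc a (b + 1)) := by
    simpa only [sub_eq_add_neg] using
      hu.add (continuous_tiltedStep k A b).fun_neg.continuousOn.upperSemicontinuousOn
  have hleft : u a - tiltedStep k A b a < u b - tiltedStep k A b b := by
    rw [tiltedStep_of_le hab.le, tiltedStep_of_le le_rfl]
    linarith
  have hright : u (b + 1) - tiltedStep k A b (b + 1) < u b - tiltedStep k A b b := by
    rw [tiltedStep_add_one, tiltedStep_of_le le_rfl]
    linarith [le_max_left (u (b + 1) - u b) 0]
  obtain ⟨y, hy, hmax⟩ :=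
    husc.exists_mem_Ioo_isMaxOn_Icc hab.le (by linarith) hleft hright
  exact ⟨k, hk, A, le_max_right _ _, y, hy, hmax.isLocalMax (Icc_mem_nhds hy.1 hy.2)⟩

theorem stmt_9 (ε : ℝ) (hε : 0 < ε) (u : ℝ → ℝ)
    (husc : UpperSemicontinuousOn u (Set.Ioi 0))
    (hvisc : ∀ y₀ ∈ Set.Ioi (0 : ℝ), ∀ ψ ψ' : ℝ → ℝ,
      (∀ y ∈ Set.Ioi (0 : ℝ), HasDerivAt ψ (ψ' y) y) →
      ContinuousOn ψ' (Set.Ioi 0) →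
      IsLocalMaxOn (fun y => u y - ψ y) (Set.Ioi 0) y₀ →
      ψ' y₀ ≤ -ε) :
    AntitoneOn u (Set.Ioi 0) := by
  intro a ha b _ hab
  by_contra! hlt
  have hab' : a < b := hab.lt_of_ne (by rintro rfl; exact hlt.false)
  have hsub : Icc a (b + 1) ⊆ Ioi 0 := fun x hx => lt_of_lt_of_le ha hx.1
  obtain ⟨k, hk, A, hA, y, hy, hmax⟩ :=
    exists_isLocalMax_sub_tiltedStep (husc.mono hsub) hab' hlt
  have hslope := hvisc y (hsub (Ioo_subset_Icc_self hy)) (tiltedStep k A b) _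
    (fun x _ => hasDerivAt_tiltedStep k A b x) (continuous_deriv_tiltedStep k A b).continuousOn
    (hmax.on _)
  linarith [le_deriv_tiltedStep (k := k) (b := b) hA y]
end

section
/- Let T > 0, γ > 0 and ε, λ, δ, ζ > 0, let u, w : [0,T]×(0,∞) → ℝ satisfy |u(t,y)| ≤ K(y + y^{−γ}) and |w(t,y)| ≤ K(y + y^{−γ}) for all (t,y), and define Φ(t,y₁,y₂) = u(t,y₁) − w(t,y₂) − (1/ε)(y₁ − y₂)² − δ e^{λ(T−t)}(y₁^{γ+1} + y₂^{γ+1}) − ζ(y₁^{−(γ+1)} + y₂^{−(γ+1)}). If (t*, y₁*, y₂*) is a global maximum point of Φ, then δ((y₁*)^{γ+1} + (y₂*)^{γ+1}) + ζ((y₁*)^{−(γ+1)} + (y₂*)^{−(γ+1)}) ≤ C(1 + y₁* + y₂* + (y₁*)^{−γ} + (y₂*)^{−γ}) for a constant C depending only on K, δ and ζ (and not on ε or λ); consequently there exist constants 0 < M₁ ≤ M₂ depending only on γ, K, δ, ζ (and not on ε or λ) such that M₁ ≤ y₁* ≤ M₂ and M₁ ≤ y₂* ≤ M₂. -/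
lemma young_aux (C a s β x : ℝ) (hC : 0 < C) (ha : 0 < a) (hs : 0 < s)
    (hβ : 0 ≤ β) (hx : 0 < x) :
    C * x ^ β ≤ a * x ^ (β + s) + C * ((C / a) ^ (1 / s)) ^ β := by
  set A : ℝ := (C / a) ^ (1 / s) with hA_def
  have hCa : (0:ℝ) < C / a := div_pos hC ha
  have hA : 0 < A := Real.rpow_pos_of_pos hCa _
  rcases le_total x A with h | h
  · have h1 : x ^ β ≤ A ^ β := Real.rpow_le_rpow hx.le h hβ
    have h2 : 0 < x ^ (β + s) := Real.rpow_pos_of_pos hx _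
    nlinarith [mul_le_mul_of_nonneg_left h1 hC.le]
  · have hAs : A ^ s = C / a := by
      rw [hA_def, ← Real.rpow_mul hCa.le, one_div_mul_cancel hs.ne', Real.rpow_one]
    have h1 : C / a ≤ x ^ s := by
      rw [← hAs]; exact Real.rpow_le_rpow hA.le h hs.le
    have h2 : x ^ (β + s) = x ^ β * x ^ s := Real.rpow_add hx _ _
    have h3 : 0 < x ^ β := Real.rpow_pos_of_pos hx _
    have h4 : 0 < A ^ β := Real.rpow_pos_of_pos hA _
    have : a * (C / a) = C := by field_simp
    nlinarith [mul_le_mul_of_nonneg_left h1 (mul_pos ha h3).le]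


/- STATEMENT 13:
Let T > 0, γ > 0 and ε, λ, δ, ζ > 0, let u, w : [0,T]×(0,∞) → ℝ satisfy
|u(t,y)| ≤ K(y + y^{−γ}) and |w(t,y)| ≤ K(y + y^{−γ}), and define
Φ(t,y₁,y₂) = u(t,y₁) − w(t,y₂) − (1/ε)(y₁ − y₂)²
           − δ e^{λ(T−t)}(y₁^{γ+1} + y₂^{γ+1}) − ζ(y₁^{−(γ+1)} + y₂^{−(γ+1)}).
If (t*, y₁*, y₂*) is a global maximum point of Φ, then
δ((y₁*)^{γ+1} + (y₂*)^{γ+1}) + ζ((y₁*)^{−(γ+1)} + (y₂*)^{−(γ+1)})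
  ≤ C(1 + y₁* + y₂* + (y₁*)^{−γ} + (y₂*)^{−γ})
for a constant C depending only on K, δ and ζ (and not on ε or λ);
consequently there exist constants 0 < M₁ ≤ M₂ depending only on γ, K, δ, ζ
(and not on ε or λ) such that M₁ ≤ y₁* ≤ M₂ and M₁ ≤ y₂* ≤ M₂.
(The quantifier order below makes C, M₁, M₂ independent of T, ε, λ, u, w.) -/
theorem stmt_13 (γ K δ ζ : ℝ) (hγ : 0 < γ) (hK : 0 ≤ K) (hδ : 0 < δ)
    (hζ : 0 < ζ) :
    ∃ C > (0 : ℝ), ∃ M₁ M₂ : ℝ, 0 < M₁ ∧ M₁ ≤ M₂ ∧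
      ∀ T ε lam : ℝ, 0 < T → 0 < ε → 0 < lam →
      ∀ u w : ℝ → ℝ → ℝ,
        (∀ t ∈ Set.Icc (0 : ℝ) T, ∀ y ∈ Set.Ioi (0 : ℝ),
          |u t y| ≤ K * (y + y ^ (-γ)) ∧ |w t y| ≤ K * (y + y ^ (-γ))) →
      ∀ Φ : ℝ → ℝ → ℝ → ℝ,
        (∀ t y₁ y₂ : ℝ, Φ t y₁ y₂ =
          u t y₁ - w t y₂ - (1 / ε) * (y₁ - y₂) ^ 2
            - δ * Real.exp (lam * (T - t)) * (y₁ ^ (γ + 1) + y₂ ^ (γ + 1))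
            - ζ * (y₁ ^ (-(γ + 1)) + y₂ ^ (-(γ + 1)))) →
      ∀ ts ∈ Set.Icc (0 : ℝ) T, ∀ y₁s ∈ Set.Ioi (0 : ℝ), ∀ y₂s ∈ Set.Ioi (0 : ℝ),
        (∀ t ∈ Set.Icc (0 : ℝ) T, ∀ y₁ ∈ Set.Ioi (0 : ℝ), ∀ y₂ ∈ Set.Ioi (0 : ℝ),
          Φ t y₁ y₂ ≤ Φ ts y₁s y₂s) →
        δ * (y₁s ^ (γ + 1) + y₂s ^ (γ + 1))
            + ζ * (y₁s ^ (-(γ + 1)) + y₂s ^ (-(γ + 1)))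
          ≤ C * (1 + y₁s + y₂s + y₁s ^ (-γ) + y₂s ^ (-γ)) ∧
        M₁ ≤ y₁s ∧ y₁s ≤ M₂ ∧ M₁ ≤ y₂s ∧ y₂s ≤ M₂ := by
  set C : ℝ := 5 * K + 2 * δ + 2 * ζ + 1 with hC_def
  have hC : 0 < C := by positivity
  set B₁ : ℝ := C * ((C / (δ / 4)) ^ (1 / γ)) ^ (1 : ℝ) with hB₁_def
  set B₂ : ℝ := C * ((C / (ζ / 4)) ^ (1 / (1:ℝ))) ^ γ with hB₂_def
  have hB₁ : 0 < B₁ := by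
    have h4 : (0:ℝ) < δ / 4 := by linarith
    have := Real.rpow_pos_of_pos (Real.rpow_pos_of_pos (div_pos hC h4) (1/γ)) (1:ℝ)
    positivity
  have hB₂ : 0 < B₂ := by
    have h4 : (0:ℝ) < ζ / 4 := by linarith
    have := Real.rpow_pos_of_pos (Real.rpow_pos_of_pos (div_pos hC h4) (1/(1:ℝ))) γ
    positivity
  set B : ℝ := C + 2 * B₁ + 2 * B₂ with hB_def
  have hB : 0 < B := by positivity
  set M₂ : ℝ := max 1 (4 * B / (3 * δ)) with hM₂_def
  set M₁ : ℝ := (max 1 (4 * B / (3 * ζ)) + 1)⁻¹ with hM₁_def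
  have hmaxζ : (0:ℝ) < max 1 (4 * B / (3 * ζ)) + 1 := by
    have : (1:ℝ) ≤ max 1 (4 * B / (3 * ζ)) := le_max_left _ _
    linarith
  have hM₁pos : 0 < M₁ := inv_pos.mpr hmaxζ
  have hM₁le : M₁ ≤ 1 := by
    rw [hM₁_def]
    have h2 : (1:ℝ) ≤ max 1 (4 * B / (3 * ζ)) + 1 := by
      have : (1:ℝ) ≤ max 1 (4 * B / (3 * ζ)) := le_max_left _ _
      linarith
    exact inv_le_one_of_one_le₀ h2
  have hM₂ge : (1:ℝ) ≤ M₂ := le_max_left _ _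
  have hM₂ge' : 4 * B / (3 * δ) ≤ M₂ := le_max_right _ _
  have hM₁inv : M₁⁻¹ = max 1 (4 * B / (3 * ζ)) + 1 := by rw [hM₁_def, inv_inv]
  have hM₁inv' : 4 * B / (3 * ζ) + 1 ≤ M₁⁻¹ := by
    rw [hM₁inv]; have := le_max_right (1:ℝ) (4 * B / (3 * ζ)); linarith
  have hM₁inv1 : (2:ℝ) ≤ M₁⁻¹ := by
    rw [hM₁inv]; have := le_max_left (1:ℝ) (4 * B / (3 * ζ)); linarith
  have hKC : K ≤ C := by rw [hC_def]; linarith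
  have hconst : 4 * K + 2 * δ + 2 * ζ ≤ C := by rw [hC_def]; linarith
  clear_value C B₁ B₂ B M₂ M₁
  refine ⟨C, hC, M₁, M₂, hM₁pos, le_trans hM₁le hM₂ge, ?_⟩
  intro T ε lam hT hε hlam u w hbound Φ hΦ ts hts y₁s hy₁ y₂s hy₂ hmax
  have hy₁0 : (0:ℝ) < y₁s := hy₁
  have hy₂0 : (0:ℝ) < y₂s := hy₂
  have hp₁ : 0 < y₁s ^ (γ + 1) := Real.rpow_pos_of_pos hy₁0 _
  have hp₂ : 0 < y₂s ^ (γ + 1) := Real.rpow_pos_of_pos hy₂0 _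
  have hq₁ : 0 < y₁s ^ (-(γ + 1)) := Real.rpow_pos_of_pos hy₁0 _
  have hq₂ : 0 < y₂s ^ (-(γ + 1)) := Real.rpow_pos_of_pos hy₂0 _
  have hr₁ : 0 < y₁s ^ (-γ) := Real.rpow_pos_of_pos hy₁0 _
  have hr₂ : 0 < y₂s ^ (-γ) := Real.rpow_pos_of_pos hy₂0 _
  have hTmem : T ∈ Set.Icc (0:ℝ) T := ⟨hT.le, le_refl T⟩
  have h1 : Φ T 1 1 ≤ Φ ts y₁s y₂s := hmax T hTmem 1 (by norm_num) 1 (by norm_num)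
  have hΦT : Φ T 1 1 = u T 1 - w T 1 - 2 * δ - 2 * ζ := by
    rw [hΦ, show T - T = 0 from sub_self T, mul_zero, Real.exp_zero]
    simp only [Real.one_rpow, sub_self]
    ring
  rw [hΦT, hΦ] at h1
  obtain ⟨hu1, hw1⟩ := hbound T hTmem 1 (by norm_num)
  obtain ⟨hu, -⟩ := hbound ts hts y₁s hy₁
  obtain ⟨-, hw⟩ := hbound ts hts y₂s hy₂
  rw [Real.one_rpow] at hu1 hw1
  have hu1' := abs_le.mp hu1
  have hw1' := abs_le.mp hw1
  have hu' := abs_le.mp hu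
  have hw' := abs_le.mp hw
  have he : (1:ℝ) ≤ Real.exp (lam * (T - ts)) :=
    Real.one_le_exp (mul_nonneg hlam.le (sub_nonneg.mpr hts.2))
  have hsq : 0 ≤ (1 / ε) * (y₁s - y₂s) ^ 2 := by positivity
  have hexp : δ * (y₁s ^ (γ + 1) + y₂s ^ (γ + 1))
      ≤ δ * Real.exp (lam * (T - ts)) * (y₁s ^ (γ + 1) + y₂s ^ (γ + 1)) := by
    have h0 : 0 ≤ δ * (Real.exp (lam * (T - ts)) - 1) * (y₁s ^ (γ + 1) + y₂s ^ (γ + 1)) :=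
      mul_nonneg (mul_nonneg hδ.le (by linarith only [he])) (by positivity)
    linarith only [h0]
  have step2 : δ * (y₁s ^ (γ + 1) + y₂s ^ (γ + 1))
      + ζ * (y₁s ^ (-(γ + 1)) + y₂s ^ (-(γ + 1)))
      ≤ K * (y₁s + y₁s ^ (-γ)) + K * (y₂s + y₂s ^ (-γ)) + 4 * K + 2 * δ + 2 * ζ := by
    linarith only [h1, hsq, hexp, hu'.2, hw'.1, hu1'.1, hw1'.2]
  have e1 : K * y₁s ≤ C * y₁s := mul_le_mul_of_nonneg_right hKC hy₁0.le
  have e2 : K * y₂s ≤ C * y₂s := mul_le_mul_of_nonneg_right hKC hy₂0.le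
  have e3 : K * y₁s ^ (-γ) ≤ C * y₁s ^ (-γ) := mul_le_mul_of_nonneg_right hKC hr₁.le
  have e4 : K * y₂s ^ (-γ) ≤ C * y₂s ^ (-γ) := mul_le_mul_of_nonneg_right hKC hr₂.le
  have hdistrib : C * (1 + y₁s + y₂s + y₁s ^ (-γ) + y₂s ^ (-γ))
      = C + C * y₁s + C * y₂s + C * y₁s ^ (-γ) + C * y₂s ^ (-γ) := by ring
  have main1 : δ * (y₁s ^ (γ + 1) + y₂s ^ (γ + 1))
      + ζ * (y₁s ^ (-(γ + 1)) + y₂s ^ (-(γ + 1)))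
      ≤ C * (1 + y₁s + y₂s + y₁s ^ (-γ) + y₂s ^ (-γ)) := by
    rw [hdistrib]
    linarith only [step2, e1, e2, e3, e4, hconst]
  refine ⟨main1, ?_⟩
  have hy1a : C * y₁s ≤ δ / 4 * y₁s ^ (γ + 1) + B₁ := by
    have := young_aux C (δ/4) γ 1 y₁s hC (by linarith only [hδ]) hγ zero_le_one hy₁0
    rw [Real.rpow_one, add_comm (1:ℝ) γ] at this
    rw [hB₁_def]; exact this
  have hy2a : C * y₂s ≤ δ / 4 * y₂s ^ (γ + 1) + B₁ := by
    have := young_aux C (δ/4) γ 1 y₂s hC (by linarith only [hδ]) hγ zero_le_one hy₂0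
    rw [Real.rpow_one, add_comm (1:ℝ) γ] at this
    rw [hB₁_def]; exact this
  have hinv₁ : ∀ e : ℝ, y₁s ^ (-e) = (y₁s⁻¹) ^ e := by
    intro e; rw [Real.rpow_neg hy₁0.le, ← Real.inv_rpow hy₁0.le]
  have hinv₂ : ∀ e : ℝ, y₂s ^ (-e) = (y₂s⁻¹) ^ e := by
    intro e; rw [Real.rpow_neg hy₂0.le, ← Real.inv_rpow hy₂0.le]
  have hy1b : C * y₁s ^ (-γ) ≤ ζ / 4 * y₁s ^ (-(γ + 1)) + B₂ := by
    rw [hinv₁ γ, hinv₁ (γ+1), hB₂_def]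
    exact young_aux C (ζ/4) 1 γ (y₁s⁻¹) hC (by linarith only [hζ]) one_pos hγ.le (by positivity)
  have hy2b : C * y₂s ^ (-γ) ≤ ζ / 4 * y₂s ^ (-(γ + 1)) + B₂ := by
    rw [hinv₂ γ, hinv₂ (γ+1), hB₂_def]
    exact young_aux C (ζ/4) 1 γ (y₂s⁻¹) hC (by linarith only [hζ]) one_pos hγ.le (by positivity)
  have main2 : 3 * δ / 4 * (y₁s ^ (γ + 1) + y₂s ^ (γ + 1))
      + 3 * ζ / 4 * (y₁s ^ (-(γ + 1)) + y₂s ^ (-(γ + 1))) ≤ B := by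
    rw [hB_def]
    rw [hdistrib] at main1
    linarith only [main1, hy1a, hy2a, hy1b, hy2b]
  have hp₁le : y₁s ^ (γ + 1) ≤ 4 * B / (3 * δ) := by
    rw [le_div_iff₀ (by linarith only [hδ] : (0:ℝ) < 3 * δ)]
    linarith only [main2, mul_pos hδ hp₂, mul_pos hζ hq₁, mul_pos hζ hq₂]
  have hp₂le : y₂s ^ (γ + 1) ≤ 4 * B / (3 * δ) := by
    rw [le_div_iff₀ (by linarith only [hδ] : (0:ℝ) < 3 * δ)]
    linarith only [main2, mul_pos hδ hp₁, mul_pos hζ hq₁, mul_pos hζ hq₂]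
  have hq₁le : y₁s ^ (-(γ + 1)) ≤ 4 * B / (3 * ζ) := by
    rw [le_div_iff₀ (by linarith only [hζ] : (0:ℝ) < 3 * ζ)]
    linarith only [main2, mul_pos hδ hp₁, mul_pos hδ hp₂, mul_pos hζ hq₂]
  have hq₂le : y₂s ^ (-(γ + 1)) ≤ 4 * B / (3 * ζ) := by
    rw [le_div_iff₀ (by linarith only [hζ] : (0:ℝ) < 3 * ζ)]
    linarith only [main2, mul_pos hδ hp₁, mul_pos hδ hp₂, mul_pos hζ hq₁]
  have upper : ∀ y : ℝ, 0 < y → y ^ (γ + 1) ≤ 4 * B / (3 * δ) → y ≤ M₂ := by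
    intro y hy hyle
    by_contra h
    push_neg at h
    have h1 : (1:ℝ) ≤ y := le_trans hM₂ge h.le
    have h2 : y ≤ y ^ (γ + 1) := by
      nth_rewrite 1 [← Real.rpow_one y]
      exact Real.rpow_le_rpow_of_exponent_le h1 (by linarith only [hγ])
    linarith only [h, h2, hyle, hM₂ge']
  have lower : ∀ y : ℝ, 0 < y → y ^ (-(γ + 1)) ≤ 4 * B / (3 * ζ) → M₁ ≤ y := by
    intro y hy hyle
    by_contra h
    push_neg at h
    have h1 : M₁⁻¹ < y⁻¹ := by
      exact (inv_lt_inv₀ hM₁pos hy).mpr h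
    have h2 : (1:ℝ) ≤ y⁻¹ := by linarith only [h1, hM₁inv1]
    have h3 : y⁻¹ ≤ (y⁻¹) ^ (γ + 1) := by
      nth_rewrite 1 [← Real.rpow_one y⁻¹]
      exact Real.rpow_le_rpow_of_exponent_le h2 (by linarith only [hγ])
    have h4 : y ^ (-(γ + 1)) = (y⁻¹) ^ (γ + 1) := by
      rw [Real.rpow_neg hy.le, ← Real.inv_rpow hy.le]
    rw [h4] at hyle
    linarith only [h1, h3, hyle, hM₁inv']
  exact ⟨lower y₁s hy₁0 hq₁le, upper y₁s hy₁0 hp₁le,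
    lower y₂s hy₂0 hq₂le, upper y₂s hy₂0 hp₂le⟩
end
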